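/- arXiv:2111.12349 — 7 statements merged into one kernel-verified Lean document; each statement's English description precedes it below -/
import Mathlib

section
/- Let d, k, n₂, t, n₃, d₁, d₂ be natural numbers satisfying: (i) 4·(k choose 2) + 2kd + (d choose 2) = n₂ + 2t + 3n₃; (ii) d₁ + d₂ = 2k + d − 1; (iii) d₁·d₂ + (n₂ + 3t + 4n₃) = (2k + d − 1)². Then, as integers, 2(n₂ + n₃) ≤ 3(d − 1). In particular d ≥ 1, so a free conic–line arrangement with only nodes, tacnodes and ordinary triple points must contain at least one line. -/
lemma two_mul_choose_two (n : ℕ) : 2 * Nat.choose n 2 = n * (n - 1) := by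
  induction n with
  | zero => rfl
  | succ n ih =>
    rw [Nat.choose_succ_succ, Nat.choose_one_right]
    cases n with
    | zero => rfl
    | succ m => simp only [Nat.succ_sub_one] at *; nlinarith [ih]

lemma choose_two_int (n : ℕ) :
    2 * ((Nat.choose n 2 : ℕ) : ℤ) = (n : ℤ) * ((n : ℤ) - 1) := by
  cases n with
  | zero => simp
  | succ m =>
    have h := two_mul_choose_two (m + 1)
    simp only [Nat.succ_sub_one] at h
    have h' : (2 : ℤ) * ((Nat.choose (m + 1) 2 : ℕ) : ℤ) = ((m : ℤ) + 1) * (m : ℤ) := by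
      exact_mod_cast h
    push_cast
    linarith [h']

/-- A free conic-line arrangement with only nodes, tacnodes and ordinary triple
points satisfies `2(n₂ + n₃) ≤ 3(d - 1)` (as integers); in particular `d ≥ 1`,
i.e. such an arrangement must contain at least one line. -/
theorem free_implies_node_triple_bound (d k n2 t n3 d1 d2 : ℕ)
    (hcc : 4 * Nat.choose k 2 + 2 * k * d + Nat.choose d 2 = n2 + 2 * t + 3 * n3)
    (hsum : (d1 : ℤ) + (d2 : ℤ) = 2 * (k : ℤ) + (d : ℤ) - 1)
    (hprod : (d1 : ℤ) * (d2 : ℤ) + ((n2 : ℤ) + 3 * (t : ℤ) + 4 * (n3 : ℤ)) =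
        (2 * (k : ℤ) + (d : ℤ) - 1) ^ 2) :
    2 * ((n2 : ℤ) + (n3 : ℤ)) ≤ 3 * ((d : ℤ) - 1) ∧ 1 ≤ d := by
  have hk := choose_two_int k
  have hd := choose_two_int d
  have hccZ : 4 * ((Nat.choose k 2 : ℕ) : ℤ) + 2 * (k : ℤ) * (d : ℤ)
      + ((Nat.choose d 2 : ℕ) : ℤ) = (n2 : ℤ) + 2 * (t : ℤ) + 3 * (n3 : ℤ) := by
    exact_mod_cast hcc
  have hineq : 2 * ((n2 : ℤ) + (n3 : ℤ)) ≤ 3 * ((d : ℤ) - 1) := by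
    nlinarith [sq_nonneg ((d1 : ℤ) - (d2 : ℤ)), hsum, hprod, hccZ, hk, hd]
  refine ⟨hineq, ?_⟩
  have h0 : (0 : ℤ) ≤ 2 * ((n2 : ℤ) + (n3 : ℤ)) := by positivity
  have : (1 : ℤ) ≤ (d : ℤ) := by linarith
  exact_mod_cast this
end

section
/- Let r, a, b, c ∈ ℂ with r ≠ 0, r² ≠ 1 and (a,b,c) ≠ (0,0,0). Suppose the line L = {[x:y:z] ∈ ℙ²(ℂ) : ax+by+cz = 0} is tangent to both conics C₁ = V(x²+y²−z²) and C₂ = V(x²+y²−r²z²), i.e. both L ∩ C₁ and L ∩ C₂ are singletons. Then c = 0 and a² + b² = 0; that is, L is one of the two lines x + iy = 0 or x − iy = 0. -/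
private lemma rep_smul (v : Fin 3 → ℂ) (hv : v ≠ 0) :
    ∃ u : ℂ, u ≠ 0 ∧ ∀ i, (Projectivization.mk ℂ v hv).rep i = u * v i := by
  have h := Projectivization.mk_rep (Projectivization.mk ℂ v hv)
  rw [Projectivization.mk_eq_mk_iff] at h
  obtain ⟨u, hu⟩ := h
  exact ⟨(u : ℂ), u.ne_zero, fun i => by rw [← hu]; simp [Units.smul_def]⟩

private lemma disc_of_singleton (k a b c : ℂ)
    (h : ∃ P : Projectivization ℂ (Fin 3 → ℂ),
        {Q : Projectivization ℂ (Fin 3 → ℂ) |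
          a * Q.rep 0 + b * Q.rep 1 + c * Q.rep 2 = 0 ∧
          (Q.rep 0) ^ 2 + (Q.rep 1) ^ 2 - k * (Q.rep 2) ^ 2 = 0} = {P}) :
    k * (a ^ 2 + b ^ 2) = c ^ 2 := by
  by_contra hne
  obtain ⟨P, hP⟩ := h
  have key : ∀ (v w : Fin 3 → ℂ) (hv : v ≠ 0) (hw : w ≠ 0),
      (a * v 0 + b * v 1 + c * v 2 = 0) →
      (v 0 ^ 2 + v 1 ^ 2 - k * v 2 ^ 2 = 0) →
      (a * w 0 + b * w 1 + c * w 2 = 0) →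
      (w 0 ^ 2 + w 1 ^ 2 - k * w 2 ^ 2 = 0) →
      ∃ u : ℂ, u ≠ 0 ∧ ∀ i, u * w i = v i := by
    intro v w hv hw hlv hcv hlw hcw
    have hmem : ∀ (x : Fin 3 → ℂ) (hx : x ≠ 0),
        (a * x 0 + b * x 1 + c * x 2 = 0) →
        (x 0 ^ 2 + x 1 ^ 2 - k * x 2 ^ 2 = 0) →
        Projectivization.mk ℂ x hx = P := by
      intro x hx hl hc'
      obtain ⟨u, hu, hrep⟩ := rep_smul x hx
      have hx' : Projectivization.mk ℂ x hx ∈ {Q : Projectivization ℂ (Fin 3 → ℂ) |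
          a * Q.rep 0 + b * Q.rep 1 + c * Q.rep 2 = 0 ∧
          (Q.rep 0) ^ 2 + (Q.rep 1) ^ 2 - k * (Q.rep 2) ^ 2 = 0} := by
        constructor
        · rw [hrep 0, hrep 1, hrep 2]; linear_combination u * hl
        · rw [hrep 0, hrep 1, hrep 2]; linear_combination u ^ 2 * hc'
      rw [hP] at hx'
      exact hx'
    have hvw : Projectivization.mk ℂ v hv = Projectivization.mk ℂ w hw := by
      rw [hmem v hv hlv hcv, hmem w hw hlw hcw]
    rw [Projectivization.mk_eq_mk_iff] at hvw
    obtain ⟨u, hu⟩ := hvw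
    exact ⟨(u : ℂ), u.ne_zero, fun i => by rw [← hu]; simp [Units.smul_def]⟩
  by_cases hab : a = 0 ∧ b = 0
  · -- line is z = 0; meets conic in [1:i:0] and [1:-i:0]
    obtain ⟨ha, hb⟩ := hab
    obtain ⟨u, hu, hcomp⟩ := key ![1, Complex.I, 0] ![1, -Complex.I, 0]
      (by intro h; have := congrFun h 0; simp at this)
      (by intro h; have := congrFun h 0; simp at this)
      (by simp [ha, hb]) (by simp [Complex.I_sq])
      (by simp [ha, hb]) (by simp [Complex.I_sq])
    have h0 := hcomp 0
    have h1 := hcomp 1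
    simp only [Matrix.cons_val_zero, Matrix.cons_val_one, Matrix.head_cons] at h0 h1
    exact Complex.I_ne_zero (by linear_combination (-1/2 : ℂ) * h1 + (-Complex.I/2) * h0)
  · by_cases hd : a ^ 2 + b ^ 2 = 0
    · -- degenerate: a,b,c all nonzero
      have ha : a ≠ 0 := by
        intro h
        apply hab
        refine ⟨h, ?_⟩
        have hb2 : b ^ 2 = 0 := by rw [h] at hd; linear_combination hd
        exact pow_eq_zero_iff (n := 2) (by norm_num) |>.mp hb2
      have hb : b ≠ 0 := by
        intro h
        apply ha
        have ha2 : a ^ 2 = 0 := by rw [h] at hd; linear_combination hd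
        exact pow_eq_zero_iff (n := 2) (by norm_num) |>.mp ha2
      have hc : c ≠ 0 := by
        intro h
        apply hne
        rw [hd, h]; ring
      obtain ⟨u, hu, hcomp⟩ := key ![b * (k * b ^ 2 - c ^ 2), -a * (k * b ^ 2 + c ^ 2), 2 * a * b * c]
        ![b, -a, 0]
        (by intro h; have := congrFun h 2; simp at this; tauto)
        (by intro h; have := congrFun h 0; simp at this; exact hb this)
        (by simp; ring)
        (by simp; linear_combination (k * b ^ 2 - c ^ 2) ^ 2 * hd)
        (by simp; ring)
        (by simp; linear_combination hd)
      have h2 := hcomp 2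
      simp only [Matrix.cons_val_two, Matrix.tail_cons, Matrix.head_cons, mul_zero] at h2
      have h2' : 2 * a * b * c = 0 := h2.symm
      simp [ha, hb, hc] at h2'
    · -- nondegenerate: two affine intersection points
      obtain ⟨e, he⟩ := IsAlgClosed.exists_pow_nat_eq (k * (a ^ 2 + b ^ 2) - c ^ 2) zero_lt_two
      have hene : e ≠ 0 := by
        intro h
        apply hne
        rw [h] at he
        linear_combination -he
      obtain ⟨u, hu, hcomp⟩ := key
        ![-a * c + b * e, -a * e - b * c, a ^ 2 + b ^ 2]
        ![-a * c - b * e, a * e - b * c, a ^ 2 + b ^ 2]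
        (by intro h; have := congrFun h 2; simp at this; exact hd this)
        (by intro h; have := congrFun h 2; simp at this; exact hd this)
        (by simp; ring)
        (by simp; linear_combination (a ^ 2 + b ^ 2) * he)
        (by simp; ring)
        (by simp; linear_combination (a ^ 2 + b ^ 2) * he)
      have h2 := hcomp 2
      have h0 := hcomp 0
      have h1 := hcomp 1
      simp only [Matrix.cons_val_zero, Matrix.cons_val_one, Matrix.head_cons,
        Matrix.cons_val_two, Matrix.tail_cons] at h0 h1 h2
      have hu1 : u = 1 := mul_right_cancel₀ hd (by rw [one_mul]; exact h2)
      rw [hu1, one_mul] at h0 h1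
      have hbe : b * e = 0 := by linear_combination (-1/2 : ℂ) * h0
      have hae : a * e = 0 := by linear_combination (1/2 : ℂ) * h1
      rcases mul_eq_zero.mp hae with h | h
      · rcases mul_eq_zero.mp hbe with h' | h'
        · exact hab ⟨h, h'⟩
        · exact hene h'
      · exact hene h

/-- If a line `ax + by + cz = 0` is tangent (meets in exactly one point) to both
conics `x² + y² = z²` and `x² + y² = r²z²` with `r ≠ 0`, `r² ≠ 1`, then `c = 0`
and `a² + b² = 0`, i.e. the line is `x + iy = 0` or `x - iy = 0`. -/
theorem common_tangent_of_bitangent_conics (r a b c : ℂ) (hr : r ≠ 0)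
    (hr1 : r ^ 2 ≠ 1) (habc : (a, b, c) ≠ (0, 0, 0))
    (h1 : ∃ P : Projectivization ℂ (Fin 3 → ℂ),
        {Q : Projectivization ℂ (Fin 3 → ℂ) |
          a * Q.rep 0 + b * Q.rep 1 + c * Q.rep 2 = 0 ∧
          (Q.rep 0) ^ 2 + (Q.rep 1) ^ 2 - (Q.rep 2) ^ 2 = 0} = {P})
    (h2 : ∃ P : Projectivization ℂ (Fin 3 → ℂ),
        {Q : Projectivization ℂ (Fin 3 → ℂ) |
          a * Q.rep 0 + b * Q.rep 1 + c * Q.rep 2 = 0 ∧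
          (Q.rep 0) ^ 2 + (Q.rep 1) ^ 2 - r ^ 2 * (Q.rep 2) ^ 2 = 0} = {P}) :
    c = 0 ∧ a ^ 2 + b ^ 2 = 0 := by
  have h1' : ∃ P : Projectivization ℂ (Fin 3 → ℂ),
      {Q : Projectivization ℂ (Fin 3 → ℂ) |
        a * Q.rep 0 + b * Q.rep 1 + c * Q.rep 2 = 0 ∧
        (Q.rep 0) ^ 2 + (Q.rep 1) ^ 2 - 1 * (Q.rep 2) ^ 2 = 0} = {P} := by
    obtain ⟨P, hP⟩ := h1
    refine ⟨P, ?_⟩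
    rw [← hP]
    ext Q
    simp
  have d1 := disc_of_singleton 1 a b c h1'
  have d2 := disc_of_singleton (r ^ 2) a b c h2
  have hab : a ^ 2 + b ^ 2 = 0 := by
    by_contra h
    apply hr1
    have : r ^ 2 * (a ^ 2 + b ^ 2) = 1 * (a ^ 2 + b ^ 2) := by rw [d1, d2]
    exact mul_right_cancel₀ h this
  refine ⟨?_, hab⟩
  have : c ^ 2 = 0 := by rw [← d2, hab]; ring
  exact pow_eq_zero_iff (n := 2) (by norm_num) |>.mp this
end

section
/- Let r, a, b, c ∈ ℂ with r ≠ 0, r² ≠ 1 and (a,b,c) ≠ (0,0,0). Suppose the line L = {[x:y:z] ∈ ℙ²(ℂ) : ax+by+cz = 0} is tangent to both conics C₁ = V(x²+y²−z²) and C₂ = V(x²+y²−r²z²), i.e. both L ∩ C₁ and L ∩ C₂ are singletons. Then L passes through one of the two intersection points of C₁ and C₂: there exists a point P ∈ ℙ²(ℂ) with P ∈ L, P ∈ C₁ and P ∈ C₂ (necessarily P = [1:i:0] or P = [1:−i:0]). -/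
open Projectivization Complex

/-- If the dual-conic condition fails, the line meets the conic in two
non-proportional points. Pure algebra version. -/
lemma exists_two_points (d a b c : ℂ) (habc : (a, b, c) ≠ (0, 0, 0))
    (hD : d * (a ^ 2 + b ^ 2) ≠ c ^ 2) :
    ∃ v w : Fin 3 → ℂ, v ≠ 0 ∧ w ≠ 0 ∧
      (a * v 0 + b * v 1 + c * v 2 = 0) ∧ (a * w 0 + b * w 1 + c * w 2 = 0) ∧
      ((v 0) ^ 2 + (v 1) ^ 2 - d * (v 2) ^ 2 = 0) ∧
      ((w 0) ^ 2 + (w 1) ^ 2 - d * (w 2) ^ 2 = 0) ∧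
      ∀ u : ℂ, ¬ (u * w 0 = v 0 ∧ u * w 1 = v 1 ∧ u * w 2 = v 2) := by
  by_cases hs : a ^ 2 + b ^ 2 = 0
  · have hc : c ≠ 0 := by
      intro hc
      exact hD (by rw [hs, hc]; ring)
    by_cases ha : a = 0
    · have hb : b = 0 := by
        have : b ^ 2 = 0 := by linear_combination hs - (a + 0) * ha
        exact pow_eq_zero_iff two_ne_zero |>.mp this
      refine ⟨![1, I, 0], ![1, -I, 0], ?_, ?_, ?_, ?_, ?_, ?_, ?_⟩
      · intro h; simpa using congrFun h 0
      · intro h; simpa using congrFun h 0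
      · simp [ha, hb]
      · simp [ha, hb]
      · simp [Complex.I_sq]
      · simp [Complex.I_sq]
      · rintro u ⟨h0, h1, -⟩
        simp only [Matrix.cons_val_zero, Matrix.cons_val_one, Matrix.head_cons,
          mul_one] at h0 h1
        rw [h0] at h1
        have : I = 0 := by linear_combination (-1/2 : ℂ) * h1
        simpa using this
    · have hb : b ≠ 0 := by
        intro hb
        apply ha
        have : a ^ 2 = 0 := by linear_combination hs - (b + 0) * hb
        exact pow_eq_zero_iff two_ne_zero |>.mp this
      refine ⟨![-b, a, 0],
        ![-(b * (d * a ^ 2 + c ^ 2)), a * (d * a ^ 2 - c ^ 2), 2 * a * b * c],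
        ?_, ?_, ?_, ?_, ?_, ?_, ?_⟩
      · intro h
        exact ha (by simpa using congrFun h 1)
      · intro h
        have h2 : 2 * a * b * c = 0 := by simpa using congrFun h 2
        exact mul_ne_zero (mul_ne_zero (mul_ne_zero two_ne_zero ha) hb) hc h2
      · simp; ring
      · simp; ring
      · simp; linear_combination hs
      · simp; linear_combination (d * a ^ 2 - c ^ 2) ^ 2 * hs
      · rintro u ⟨h0, h1, h2⟩
        simp only [Matrix.cons_val_zero, Matrix.cons_val_one, Matrix.head_cons,
          Matrix.cons_val_two, Matrix.tail_cons, mul_zero] at h0 h1 h2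
        have hu : u = 0 := by
          rcases mul_eq_zero.mp h2 with h | h
          · exact h
          · exact absurd h
              (mul_ne_zero (mul_ne_zero (mul_ne_zero two_ne_zero ha) hb) hc)
        rw [hu, zero_mul] at h1
        exact ha h1.symm
  · obtain ⟨ε, hε⟩ := IsAlgClosed.exists_pow_nat_eq
      (k := ℂ) (d * (a ^ 2 + b ^ 2) - c ^ 2) zero_lt_two
    have hεne : ε ≠ 0 := by
      intro h
      rw [h] at hε
      exact hD (by linear_combination -hε)
    refine ⟨![-(a * c) + b * ε, -(b * c) - a * ε, a ^ 2 + b ^ 2],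
      ![-(a * c) - b * ε, -(b * c) + a * ε, a ^ 2 + b ^ 2],
      ?_, ?_, ?_, ?_, ?_, ?_, ?_⟩
    · intro h; exact hs (by simpa using congrFun h 2)
    · intro h; exact hs (by simpa using congrFun h 2)
    · simp; ring
    · simp; ring
    · simp; linear_combination (a ^ 2 + b ^ 2) * hε
    · simp; linear_combination (a ^ 2 + b ^ 2) * hε
    · rintro u ⟨h0, h1, h2⟩
      simp only [Matrix.cons_val_zero, Matrix.cons_val_one, Matrix.head_cons,
        Matrix.cons_val_two, Matrix.tail_cons] at h0 h1 h2
      have hu : u = 1 := by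
        rcases mul_eq_zero.mp (show (u - 1) * (a ^ 2 + b ^ 2) = 0 by
          linear_combination h2) with h | h
        · exact sub_eq_zero.mp h
        · exact absurd h hs
      rw [hu, one_mul] at h0 h1
      have ha' : a * ε = 0 := by linear_combination (1 / 2 : ℂ) * h1
      have hb' : b * ε = 0 := by linear_combination (-1 / 2 : ℂ) * h0
      have ha0 : a = 0 := by
        rcases mul_eq_zero.mp ha' with h | h
        · exact h
        · exact absurd h hεne
      have hb0 : b = 0 := by
        rcases mul_eq_zero.mp hb' with h | h
        · exact h
        · exact absurd h hεne
      exact hs (by rw [ha0, hb0]; ring)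

/-- Tangency (singleton intersection) forces the dual-conic condition. -/
lemma tangent_dual (d a b c : ℂ) (habc : (a, b, c) ≠ (0, 0, 0))
    (h : ∃ P : Projectivization ℂ (Fin 3 → ℂ),
        {Q : Projectivization ℂ (Fin 3 → ℂ) |
          a * Q.rep 0 + b * Q.rep 1 + c * Q.rep 2 = 0 ∧
          (Q.rep 0) ^ 2 + (Q.rep 1) ^ 2 - d * (Q.rep 2) ^ 2 = 0} = {P}) :
    d * (a ^ 2 + b ^ 2) = c ^ 2 := by
  by_contra hD
  obtain ⟨v, w, hv, hw, hlv, hlw, hqv, hqw, hprop⟩ := exists_two_points d a b c habc hD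
  obtain ⟨P, hP⟩ := h
  obtain ⟨uv, huv⟩ := Projectivization.exists_smul_eq_mk_rep ℂ v hv
  obtain ⟨uw, huw⟩ := Projectivization.exists_smul_eq_mk_rep ℂ w hw
  have hvmem : Projectivization.mk ℂ v hv ∈ ({P} : Set _) := by
    rw [← hP]
    refine ⟨?_, ?_⟩ <;>
      simp only [← huv, Pi.smul_apply, Units.smul_def, smul_eq_mul]
    · linear_combination (uv : ℂ) * hlv
    · linear_combination (uv : ℂ) ^ 2 * hqv
  have hwmem : Projectivization.mk ℂ w hw ∈ ({P} : Set _) := by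
    rw [← hP]
    refine ⟨?_, ?_⟩ <;>
      simp only [← huw, Pi.smul_apply, Units.smul_def, smul_eq_mul]
    · linear_combination (uw : ℂ) * hlw
    · linear_combination (uw : ℂ) ^ 2 * hqw
  have heq : Projectivization.mk ℂ v hv = Projectivization.mk ℂ w hw := by
    rw [Set.mem_singleton_iff] at hvmem hwmem
    rw [hvmem, hwmem]
  obtain ⟨u, hu⟩ := (Projectivization.mk_eq_mk_iff ℂ v w hv hw).mp heq
  exact hprop u ⟨by rw [← congrFun hu 0]; simp [Units.smul_def],
    by rw [← congrFun hu 1]; simp [Units.smul_def],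
    by rw [← congrFun hu 2]; simp [Units.smul_def]⟩

/-- If a line `ax + by + cz = 0` is tangent (meets in exactly one point) to both
conics `x² + y² = z²` and `x² + y² = r²z²` with `r ≠ 0`, `r² ≠ 1`, then the line
passes through one of the two intersection points of the two conics. -/
theorem common_tangent_passes_through_tacnode (r a b c : ℂ) (hr : r ≠ 0)
    (hr1 : r ^ 2 ≠ 1) (habc : (a, b, c) ≠ (0, 0, 0))
    (h1 : ∃ P : Projectivization ℂ (Fin 3 → ℂ),
        {Q : Projectivization ℂ (Fin 3 → ℂ) |
          a * Q.rep 0 + b * Q.rep 1 + c * Q.rep 2 = 0 ∧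
          (Q.rep 0) ^ 2 + (Q.rep 1) ^ 2 - (Q.rep 2) ^ 2 = 0} = {P})
    (h2 : ∃ P : Projectivization ℂ (Fin 3 → ℂ),
        {Q : Projectivization ℂ (Fin 3 → ℂ) |
          a * Q.rep 0 + b * Q.rep 1 + c * Q.rep 2 = 0 ∧
          (Q.rep 0) ^ 2 + (Q.rep 1) ^ 2 - r ^ 2 * (Q.rep 2) ^ 2 = 0} = {P}) :
    ∃ P : Projectivization ℂ (Fin 3 → ℂ),
      (a * P.rep 0 + b * P.rep 1 + c * P.rep 2 = 0) ∧
      ((P.rep 0) ^ 2 + (P.rep 1) ^ 2 - (P.rep 2) ^ 2 = 0) ∧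
      ((P.rep 0) ^ 2 + (P.rep 1) ^ 2 - r ^ 2 * (P.rep 2) ^ 2 = 0) := by
  have hd1 : (1 : ℂ) * (a ^ 2 + b ^ 2) = c ^ 2 := by
    apply tangent_dual 1 a b c habc
    simpa only [one_mul] using h1
  have hd2 : r ^ 2 * (a ^ 2 + b ^ 2) = c ^ 2 := tangent_dual (r ^ 2) a b c habc h2
  have hs : a ^ 2 + b ^ 2 = 0 := by
    have h := sub_eq_zero.mpr (hd2.trans hd1.symm)
    have : (r ^ 2 - 1) * (a ^ 2 + b ^ 2) = 0 := by linear_combination h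
    rcases mul_eq_zero.mp this with h' | h'
    · exact absurd (sub_eq_zero.mp h') hr1
    · exact h'
  have hc : c = 0 := by
    have : c ^ 2 = 0 := by linear_combination hd1.symm + hs
    exact pow_eq_zero_iff two_ne_zero |>.mp this
  have hab : ¬ (a = 0 ∧ b = 0) := by
    rintro ⟨ha, hb⟩
    exact habc (by simp [ha, hb, hc])
  have hvne : (![b, -a, 0] : Fin 3 → ℂ) ≠ 0 := by
    intro h
    apply hab
    have h0 : b = 0 := by simpa using congrFun h 0
    have h1 : -a = 0 := by simpa using congrFun h 1
    exact ⟨neg_eq_zero.mp h1, h0⟩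
  refine ⟨Projectivization.mk ℂ ![b, -a, 0] hvne, ?_, ?_, ?_⟩ <;>
    obtain ⟨u, hu⟩ := Projectivization.exists_smul_eq_mk_rep ℂ ![b, -a, 0] hvne <;>
    simp only [← hu, Pi.smul_apply, Units.smul_def, smul_eq_mul, Matrix.cons_val_zero,
      Matrix.cons_val_one, Matrix.head_cons, Matrix.cons_val_two, Matrix.tail_cons,
      mul_zero, hc]
  · ring
  · linear_combination (u : ℂ) ^ 2 * hs
  · linear_combination (u : ℂ) ^ 2 * hs
end

section
/- Let f = (x − z)(x² + y² − z²) ∈ ℂ[x,y,z] (a smooth conic together with a tangent line), let J_f = ⟨∂f/∂x, ∂f/∂y, ∂f/∂z⟩ be its Jacobian ideal, and let m = ⟨x, y, z⟩. Then the colon ideal (J_f : m) equals J_f; that is, J_f is saturated with respect to m, i.e. the curve f = 0 is a free plane curve. -/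
open MvPolynomial


lemma mem_span_triple {R : Type*} [CommRing R] {u v w x : R} :
    x ∈ Ideal.span {u, v, w} ↔ ∃ p q r, x = p*u + q*v + r*w := by
  constructor
  · intro h
    rw [Ideal.mem_span_insert] at h
    obtain ⟨p, y, hy, rfl⟩ := h
    rw [Ideal.mem_span_pair] at hy
    obtain ⟨q, r, rfl⟩ := hy
    exact ⟨p, q, r, by ring⟩
  · rintro ⟨p, q, r, rfl⟩
    refine Ideal.add_mem _ (Ideal.add_mem _ ?_ ?_) ?_ <;>
      exact Ideal.mul_mem_left _ _ (Ideal.subset_span (by simp))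

lemma exists_decomp (φ : MvPolynomial (Fin 3) ℂ →ₐ[ℂ] MvPolynomial (Fin 3) ℂ)
    (d : MvPolynomial (Fin 3) ℂ)
    (hX : ∀ i, ∃ c, X i - φ (X i) = d * c) (u : MvPolynomial (Fin 3) ℂ) :
    ∃ u₁, u = φ u + d * u₁ := by
  induction u using MvPolynomial.induction_on with
  | C c => exact ⟨0, by simp⟩
  | add p q hp hq =>
    obtain ⟨p₁, hp⟩ := hp; obtain ⟨q₁, hq⟩ := hq
    exact ⟨p₁ + q₁, by rw [map_add]; linear_combination hp + hq⟩
  | mul_X p i hp =>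
    obtain ⟨p₁, hp⟩ := hp
    obtain ⟨c, hc⟩ := hX i
    exact ⟨p₁ * X i + φ p * c, by rw [map_mul]; linear_combination X i * hp + φ p * hc⟩

noncomputable def sig : MvPolynomial (Fin 3) ℂ →ₐ[ℂ] MvPolynomial (Fin 3) ℂ :=
  aeval ![C 2⁻¹ * (X 0 - X 2), X 1, -(C 2⁻¹ * (X 0 - X 2))]

noncomputable def del : MvPolynomial (Fin 3) ℂ →ₐ[ℂ] MvPolynomial (Fin 3) ℂ :=
  aeval ![C 2⁻¹ * (X 0 + X 2), X 1, C 2⁻¹ * (X 0 + X 2)]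

lemma h2 : (C 2⁻¹ : MvPolynomial (Fin 3) ℂ) + C 2⁻¹ = 1 := by
  rw [← C_add, ← C_1]; norm_num

lemma sig_x0 : sig (X 0) = C 2⁻¹ * ((X 0 : MvPolynomial (Fin 3) ℂ) - X 2) := by
  simp [sig]

lemma sig_x2 : sig (X 2) = -(C 2⁻¹ * ((X 0 : MvPolynomial (Fin 3) ℂ) - X 2)) := by
  simp [sig]

lemma del_x0 : del (X 0) = C 2⁻¹ * ((X 0 : MvPolynomial (Fin 3) ℂ) + X 2) := by
  simp [del]

lemma del_x2 : del (X 2) = C 2⁻¹ * ((X 0 : MvPolynomial (Fin 3) ℂ) + X 2) := by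
  simp [del]

lemma sig_a : sig (X 0 - X 2) = X 0 - X 2 := by
  simp only [sig, map_sub, aeval_X]
  simp only [Matrix.cons_val_zero, Matrix.cons_val_two, Matrix.tail_cons, Matrix.head_cons]
  linear_combination (X 0 - X 2 : MvPolynomial (Fin 3) ℂ) * h2

lemma sig_b : sig (X 0 + X 2) = 0 := by
  simp only [sig, map_add, aeval_X]
  simp only [Matrix.cons_val_zero, Matrix.cons_val_two, Matrix.tail_cons, Matrix.head_cons]
  ring

lemma sig_y : sig (X 1) = X 1 := by
  simp only [sig, aeval_X]
  simp [Matrix.cons_val_one, Matrix.head_cons]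

lemma del_a : del (X 0 - X 2) = 0 := by
  simp only [del, map_sub, aeval_X]
  simp only [Matrix.cons_val_zero, Matrix.cons_val_two, Matrix.tail_cons, Matrix.head_cons]
  ring

lemma del_y : del (X 1) = X 1 := by
  simp only [del, aeval_X]
  simp [Matrix.cons_val_one, Matrix.head_cons]

lemma sig_decomp : ∀ i, ∃ c, (X i : MvPolynomial (Fin 3) ℂ) - sig (X i) = (X 0 + X 2) * c := by
  intro i
  fin_cases i
  · refine ⟨C 2⁻¹, ?_⟩
    show (X 0 : MvPolynomial (Fin 3) ℂ) - sig (X 0) = (X 0 + X 2) * C 2⁻¹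
    simp only [sig, aeval_X, Matrix.cons_val_zero]
    linear_combination (-(X 0 : MvPolynomial (Fin 3) ℂ)) * h2
  · refine ⟨0, ?_⟩
    show (X 1 : MvPolynomial (Fin 3) ℂ) - sig (X 1) = (X 0 + X 2) * 0
    rw [sig_y]; ring
  · refine ⟨C 2⁻¹, ?_⟩
    show (X 2 : MvPolynomial (Fin 3) ℂ) - sig (X 2) = (X 0 + X 2) * C 2⁻¹
    simp only [sig, aeval_X, Matrix.cons_val_two, Matrix.tail_cons, Matrix.head_cons]
    linear_combination (-(X 2 : MvPolynomial (Fin 3) ℂ)) * h2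

lemma del_decomp : ∀ i, ∃ c, (X i : MvPolynomial (Fin 3) ℂ) - del (X i) = (X 0 - X 2) * c := by
  intro i
  fin_cases i
  · refine ⟨C 2⁻¹, ?_⟩
    show (X 0 : MvPolynomial (Fin 3) ℂ) - del (X 0) = (X 0 - X 2) * C 2⁻¹
    simp only [del, aeval_X, Matrix.cons_val_zero]
    linear_combination (-(X 0 : MvPolynomial (Fin 3) ℂ)) * h2
  · refine ⟨0, ?_⟩
    show (X 1 : MvPolynomial (Fin 3) ℂ) - del (X 1) = (X 0 - X 2) * 0
    rw [del_y]; ring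
  · refine ⟨-(C 2⁻¹), ?_⟩
    show (X 2 : MvPolynomial (Fin 3) ℂ) - del (X 2) = (X 0 - X 2) * (-(C 2⁻¹))
    simp only [del, aeval_X, Matrix.cons_val_two, Matrix.tail_cons, Matrix.head_cons]
    linear_combination (-(X 2 : MvPolynomial (Fin 3) ℂ)) * h2

lemma key (g : MvPolynomial (Fin 3) ℂ)
    (h : (X 0 + X 2) * g ∈ Ideal.span {((X 0 : MvPolynomial (Fin 3) ℂ) - X 2)^2,
        (X 0 - X 2) * X 1, (X 1 : MvPolynomial (Fin 3) ℂ)^2 + 2*((X 0 - X 2)*(X 0 + X 2))}) :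
    g ∈ Ideal.span {((X 0 : MvPolynomial (Fin 3) ℂ) - X 2)^2,
        (X 0 - X 2) * X 1, (X 1 : MvPolynomial (Fin 3) ℂ)^2 + 2*((X 0 - X 2)*(X 0 + X 2))} := by
  rw [mem_span_triple] at h
  obtain ⟨p, q, r, hpqr⟩ := h
  obtain ⟨p₁, hp⟩ := exists_decomp sig (X 0 + X 2) sig_decomp p
  obtain ⟨q₁, hq⟩ := exists_decomp sig (X 0 + X 2) sig_decomp q
  obtain ⟨r₁, hr⟩ := exists_decomp sig (X 0 + X 2) sig_decomp r
  have dagger : sig p * (X 0 - X 2)^2 + sig q * ((X 0 - X 2) * X 1) + sig r * X 1 ^ 2 = 0 := by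
    have E := congrArg sig hpqr
    simp only [map_add, map_mul, map_pow, sig_a, sig_b, sig_y, sig_x0, sig_x2, map_ofNat, mul_zero, zero_mul,
      add_zero, zero_add] at E
    linear_combination -E
  have E2 := congrArg del dagger
  simp only [map_add, map_mul, map_pow, del_a, del_y, del_x0, del_x2, map_zero, mul_zero, zero_mul,
    add_zero, zero_add] at E2
  have h3 : del (sig r) * X 1 ^ 2 = 0 := by linear_combination E2
  have h4 : del (sig r) = 0 := by
    rcases mul_eq_zero.1 h3 with h' | h'
    · exact h'
    · exact absurd h' (pow_ne_zero _ (X_ne_zero _))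
  obtain ⟨s, hs⟩ := exists_decomp del (X 0 - X 2) del_decomp (sig r)
  rw [h4, zero_add] at hs
  have hb0 : (X 0 + X 2 : MvPolynomial (Fin 3) ℂ) ≠ 0 := by
    intro hcon
    have := congrArg (eval (fun _ => (1:ℂ))) hcon
    simp at this
  have hg : g = (p₁ + 2*s) * (X 0 - X 2)^2 + q₁ * ((X 0 - X 2) * X 1)
      + r₁ * ((X 1 : MvPolynomial (Fin 3) ℂ)^2 + 2*((X 0 - X 2)*(X 0 + X 2))) := by
    apply mul_left_cancel₀ hb0
    linear_combination hpqr + (X 0 - X 2)^2 * hp + ((X 0 - X 2) * X 1) * hq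
      + ((X 1 : MvPolynomial (Fin 3) ℂ)^2 + 2*((X 0 - X 2)*(X 0 + X 2))) * hr + dagger
      + (2*(X 0 - X 2)*(X 0 + X 2)) * hs
  exact mem_span_triple.mpr ⟨p₁ + 2*s, q₁, r₁, hg⟩

/-- The conic-line arrangement `(x - z)(x² + y² - z²) = 0` (a smooth conic with a
tangent line) is a free plane curve: its Jacobian ideal is saturated with respect
to the irrelevant ideal `⟨x, y, z⟩`, i.e. `(J_f : m) = J_f`. -/
theorem conic_plus_tangent_line_is_free
    (f : MvPolynomial (Fin 3) ℂ)
    (hf : f = (X 0 - X 2) * (X 0 ^ 2 + X 1 ^ 2 - X 2 ^ 2))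
    (Jf : Ideal (MvPolynomial (Fin 3) ℂ))
    (hJf : Jf = Ideal.span {pderiv 0 f, pderiv 1 f, pderiv 2 f})
    (m : Ideal (MvPolynomial (Fin 3) ℂ))
    (hm : m = Ideal.span {X 0, X 1, X 2}) :
    Submodule.colon Jf m = Jf := by
  have hd0 : pderiv 0 f = 3 * X 0 ^ 2 + X 1 ^ 2 - X 2 ^ 2 - 2 * X 0 * X 2 := by
    subst hf; simp [pderiv_mul]; ring
  have hd1 : pderiv 1 f = 2 * X 0 * X 1 - 2 * X 1 * X 2 := by
    subst hf; simp [pderiv_mul]; ring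
  have hd2 : pderiv 2 f = -(X 0 ^ 2) - X 1 ^ 2 + 3 * X 2 ^ 2 - 2 * X 0 * X 2 := by
    subst hf; simp [pderiv_mul]; ring
  have hJ : Jf = Ideal.span {((X 0 : MvPolynomial (Fin 3) ℂ) - X 2)^2,
      (X 0 - X 2) * X 1, (X 1 : MvPolynomial (Fin 3) ℂ)^2 + 2*((X 0 - X 2)*(X 0 + X 2))} := by
    rw [hJf, hd0, hd1, hd2]
    apply le_antisymm
    · rw [Ideal.span_le]
      rintro t ht
      simp only [Set.mem_insert_iff, Set.mem_singleton_iff] at ht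
      rcases ht with rfl | rfl | rfl
      · exact mem_span_triple.mpr ⟨1, 0, 1, by ring⟩
      · exact mem_span_triple.mpr ⟨0, 2, 0, by ring⟩
      · exact mem_span_triple.mpr ⟨1, 0, -1, by ring⟩
    · rw [Ideal.span_le]
      rintro t ht
      simp only [Set.mem_insert_iff, Set.mem_singleton_iff] at ht
      rcases ht with rfl | rfl | rfl
      · exact mem_span_triple.mpr ⟨C 2⁻¹, 0, C 2⁻¹,
          by linear_combination (-(((X 0 : MvPolynomial (Fin 3) ℂ) - X 2)^2)) * h2⟩
      · exact mem_span_triple.mpr ⟨0, C 2⁻¹, 0,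
          by linear_combination (-(((X 0 : MvPolynomial (Fin 3) ℂ) - X 2) * X 1)) * h2⟩
      · exact mem_span_triple.mpr ⟨C 2⁻¹, 0, -(C 2⁻¹),
          by linear_combination (-((X 1 : MvPolynomial (Fin 3) ℂ)^2 + 2*((X 0 - X 2)*(X 0 + X 2)))) * h2⟩
  apply le_antisymm
  · intro g hg
    rw [Submodule.mem_colon] at hg
    have hx := hg (X 0) (by rw [hm]; exact Ideal.subset_span (by simp))
    have hz := hg (X 2) (by rw [hm]; exact Ideal.subset_span (by simp))
    rw [smul_eq_mul] at hx hz
    have hb : (X 0 + X 2) * g ∈ Jf := by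
      have := Ideal.add_mem _ hx hz
      have heq : (X 0 + X 2) * g = g * X 0 + g * X 2 := by ring
      rwa [← heq] at this
    rw [hJ] at hb ⊢
    exact key g hb
  · intro g hg
    rw [Submodule.mem_colon]
    intro p hp
    rw [smul_eq_mul]
    exact Ideal.mul_mem_right _ _ hg
end

section
/- Let f = (x² − z²)(x² + y² − z²) ∈ ℂ[x,y,z] (a smooth conic together with two tangent lines), let J_f = ⟨∂f/∂x, ∂f/∂y, ∂f/∂z⟩ be its Jacobian ideal, and let m = ⟨x, y, z⟩. Then the colon ideal (J_f : m) equals J_f; that is, J_f is saturated with respect to m, i.e. the curve f = 0 is a free plane curve. -/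
/-!
Up to the unit `2`, `∇f` is the cross product of `σ = (z, 0, x)` and
`ρ = (xy, -(2x² + y² - 2z²), yz)`, and every syzygy of `∇f` is uniquely a combination of
`σ` and `ρ`. An ideal `(a₀, a₁, a₂)` whose syzygy module is free in this way is saturated:
if `xᵢ p = vᵢ ⬝ a`, the syzygies `xⱼ vᵢ - xᵢ vⱼ` satisfy the Koszul relation, so their
`σ`- and `ρ`-coefficients are Koszul cycles of `(x, y, z)`, hence boundaries; this gives
`v₀ ≡ x u` modulo `σ, ρ`, whence `p = u ⬝ a`.
-/

open MvPolynomial Matrix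

theorem Set.range_fin_three {α : Type*} (g : Fin 3 → α) : Set.range g = {g 0, g 1, g 2} := by
  ext
  simp [Fin.exists_fin_succ, eq_comm]

namespace MvPolynomial

variable {σ R : Type*}

theorem not_dvd_of_eval_eq_zero [CommSemiring R] {d a : MvPolynomial σ R} (v : σ → R)
    (hd : eval v d = 0) (ha : eval v a ≠ 0) : ¬d ∣ a :=
  fun h => ha (zero_dvd_iff.mp (hd ▸ map_dvd (eval v) h))

variable [CommRing R]

theorem exists_eq_X_mul_of_X_mul_eq_X_mul [IsDomain R] {i j : σ} (hij : i ≠ j)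
    {u v : MvPolynomial σ R} (h : X i * u = X j * v) : ∃ r, u = X j * r ∧ v = X i * r := by
  obtain ⟨r, rfl⟩ : X j ∣ u :=
    (X_prime.dvd_or_dvd ⟨v, h⟩).resolve_left (X_dvd_X.not.mpr hij.symm)
  refine ⟨r, rfl, mul_left_cancel₀ (X_ne_zero j) ?_⟩
  linear_combination -h

variable [DecidableEq σ]

theorem X_sub_dvd_sub_bind₁_update (i : σ) (q p : MvPolynomial σ R) :
    X i - q ∣ p - bind₁ (Function.update X i q) p := by
  let π := Ideal.Quotient.mkₐ R (Ideal.span {X i - q})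
  have hπ : π.comp (bind₁ (Function.update X i q)) = π := by
    ext j
    obtain rfl | hj := eq_or_ne j i
    · simp only [π, AlgHom.comp_apply, bind₁_X_right, Function.update_self,
        Ideal.Quotient.mkₐ_eq_mk, Ideal.Quotient.eq, Ideal.mem_span_singleton]
      exact ⟨-1, by ring⟩
    · simp only [AlgHom.comp_apply, bind₁_X_right, Function.update_of_ne hj]
  rw [← Ideal.mem_span_singleton, ← Ideal.Quotient.eq]
  exact (congrArg (· p) hπ).symm

theorem X_sub_dvd_or_dvd [IsDomain R] {i : σ} {q a b : MvPolynomial σ R}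
    (hq : bind₁ (Function.update X i q) q = q) (h : X i - q ∣ a * b) :
    X i - q ∣ a ∨ X i - q ∣ b := by
  have hdvd (p : MvPolynomial σ R) : X i - q ∣ p ↔ bind₁ (Function.update X i q) p = 0 := by
    refine ⟨fun ⟨c, hc⟩ => ?_, fun hp => ?_⟩
    · rw [hc, map_mul, map_sub, bind₁_X_right, Function.update_self, hq, sub_self, zero_mul]
    · simpa only [hp, sub_zero] using X_sub_dvd_sub_bind₁_update i q p
  rw [hdvd, map_mul] at h
  simpa only [hdvd] using mul_eq_zero.mp h

theorem X0_sq_sub_X2_sq_dvd_of_dvd_X1_sq_mul [IsDomain R] {K : MvPolynomial (Fin 3) R}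
    (h : X 0 ^ 2 - X 2 ^ 2 ∣ X 1 ^ 2 * K) : X 0 ^ 2 - X 2 ^ 2 ∣ K := by
  obtain ⟨K', rfl⟩ : X 0 - X 2 ∣ K :=
    (X_sub_dvd_or_dvd (by simp) (dvd_trans ⟨X 0 + X 2, by ring⟩ h)).resolve_left
      (not_dvd_of_eval_eq_zero ![1, 1, 1] (by simp) (by simp))
  obtain ⟨c, hc⟩ := h
  have hxz : (X 0 - X 2 : MvPolynomial (Fin 3) R) ≠ 0 :=
    ne_of_apply_ne (eval ![1, 0, 0]) (by simp)
  have hc' : X 1 ^ 2 * K' = (X 0 - -X 2) * c :=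
    mul_left_cancel₀ hxz (by linear_combination hc)
  obtain ⟨t, rfl⟩ : X 0 - -X 2 ∣ K' :=
    (X_sub_dvd_or_dvd (by simp) ⟨c, hc'⟩).resolve_left
      (not_dvd_of_eval_eq_zero ![1, 1, -1] (by simp) (by simp))
  exact ⟨t, by ring⟩

theorem exists_eq_cross_X_of_dotProduct_X_eq_zero [IsDomain R]
    {a : Fin 3 → MvPolynomial (Fin 3) R} (ha : a ⬝ᵥ X = 0) : ∃ c, a = c ⨯₃ X := by
  set φ := bind₁ (R := R) (Function.update (X : Fin 3 → MvPolynomial (Fin 3) R) 0 0)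
  obtain ⟨e₁, he₁⟩ := X_sub_dvd_sub_bind₁_update 0 0 (a 1)
  obtain ⟨e₂, he₂⟩ := X_sub_dvd_sub_bind₁_update 0 0 (a 2)
  have hφ : X 1 * φ (a 1) = X 2 * -φ (a 2) := by
    have := congrArg φ ha
    simp only [φ, dotProduct, Fin.sum_univ_three, map_add, map_mul, map_zero, bind₁_X_right,
      Function.update_self, Function.update_of_ne (by decide : (1 : Fin 3) ≠ 0),
      Function.update_of_ne (by decide : (2 : Fin 3) ≠ 0), mul_zero, zero_add] at this
    linear_combination this
  obtain ⟨r, hr₁, hr₂⟩ := exists_eq_X_mul_of_X_mul_eq_X_mul (by decide) hφ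
  have ha₀ : a 0 = -(X 1 * e₁) - X 2 * e₂ := by
    refine mul_left_cancel₀ (X_ne_zero 0) ?_
    simp only [dotProduct, Fin.sum_univ_three] at ha
    linear_combination ha - X 1 * he₁ - X 2 * he₂ - X 1 * hr₁ + X 2 * hr₂
  refine ⟨![-r, -e₂, e₁], ?_⟩
  ext1 k
  fin_cases k <;> simp only [Fin.zero_eta, Fin.mk_one, Fin.reduceFinMk, cross_apply, cons_val]
  · linear_combination ha₀
  · linear_combination he₁ + hr₁
  · linear_combination he₂ - hr₂

end MvPolynomial

theorem Ideal.colon_span_range_eq_self_of_syzygies {R : Type*} [CommRing R]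
    {x a σ ρ : Fin 3 → R}
    (hx : ∀ b, b ⬝ᵥ x = 0 → ∃ c, b = c ⨯₃ x) (hx₀ : IsLeftRegular (x 0))
    (hx₁ : ∀ w, x 0 ∣ x 1 * w → x 0 ∣ w) (hσ : σ ⬝ᵥ a = 0) (hρ : ρ ⬝ᵥ a = 0)
    (hsyz : ∀ w, w ⬝ᵥ a = 0 → ∃ A B : R, w = A • σ + B • ρ)
    (hind : ∀ A B : R, A • σ + B • ρ = 0 → A = 0 ∧ B = 0) :
    (span (Set.range a)).colon (span (Set.range x) : Set R) = span (Set.range a) := by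
  refine le_antisymm (fun p hp => ?_) le_colon
  rw [colon_span, Submodule.mem_colon] at hp
  choose v hv using fun i => mem_span_range_iff_exists_fun.mp (hp (x i) ⟨i, rfl⟩)
  replace hv (i : Fin 3) : v i ⬝ᵥ a = x i * p := (hv i).trans (mul_comm _ _)
  have hpair (i j : Fin 3) : ∃ A B : R, x j • v i - x i • v j = A • σ + B • ρ :=
    hsyz _ (by simp only [sub_dotProduct, smul_dotProduct, hv, smul_eq_mul]; ring)
  obtain ⟨A₀, B₀, h₀⟩ := hpair 1 2
  obtain ⟨A₁, B₁, h₁⟩ := hpair 2 0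
  obtain ⟨A₂, B₂, h₂⟩ := hpair 0 1
  have hsum : (![A₀, A₁, A₂] ⬝ᵥ x) • σ + (![B₀, B₁, B₂] ⬝ᵥ x) • ρ = 0 := by
    ext k
    have h₀ := congrFun h₀ k
    have h₁ := congrFun h₁ k
    have h₂ := congrFun h₂ k
    simp only [Pi.add_apply, Pi.sub_apply, Pi.smul_apply, smul_eq_mul] at h₀ h₁ h₂
    simp only [dotProduct, Fin.sum_univ_three, cons_val, Pi.add_apply, Pi.smul_apply,
      smul_eq_mul, Pi.zero_apply]
    linear_combination -(x 0 * h₀) - x 1 * h₁ - x 2 * h₂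
  obtain ⟨hA, hB⟩ := hind _ _ hsum
  obtain ⟨c, hc⟩ := hx _ hA
  obtain ⟨d, hd⟩ := hx _ hB
  have hA₂ : A₂ = c 0 * x 1 - c 1 * x 0 := congrFun hc 2
  have hB₂ : B₂ = d 0 * x 1 - d 1 * x 0 := congrFun hd 2
  have hdvd (k : Fin 3) :
      x 0 ∣ x 1 * (v 0 k - c 0 * σ k - d 0 * ρ k) := by
    refine ⟨v 1 k - c 1 * σ k - d 1 * ρ k, ?_⟩
    have h₂ := congrFun h₂ k
    simp only [Pi.add_apply, Pi.sub_apply, Pi.smul_apply, smul_eq_mul] at h₂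
    linear_combination h₂ + σ k * hA₂ + ρ k * hB₂
  choose u hu using fun k => hx₁ _ (hdvd k)
  have hv₀ : v 0 = x 0 • u + c 0 • σ + d 0 • ρ := by
    ext k
    simp only [Pi.add_apply, Pi.smul_apply, smul_eq_mul]
    linear_combination hu k
  have hpu : p = u ⬝ᵥ a := hx₀ <| show x 0 * p = x 0 * (u ⬝ᵥ a) by
    rw [← hv 0, hv₀]
    simp only [add_dotProduct, smul_dotProduct, hσ, hρ, smul_eq_mul, mul_zero, add_zero]
  exact hpu ▸ mem_span_range_iff_exists_fun.mpr ⟨u, rfl⟩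

namespace ConicTangents

variable (R : Type*) [CommRing R]

noncomputable def linSyzygy : Fin 3 → MvPolynomial (Fin 3) R := ![X 2, 0, X 0]

noncomputable def quadSyzygy : Fin 3 → MvPolynomial (Fin 3) R :=
  ![X 0 * X 1, -(2 * X 0 ^ 2 + X 1 ^ 2 - 2 * X 2 ^ 2), X 1 * X 2]

theorem linSyzygy_cross_quadSyzygy :
    linSyzygy R ⨯₃ quadSyzygy R =
      ![X 0 * (2 * X 0 ^ 2 + X 1 ^ 2 - 2 * X 2 ^ 2), X 1 * (X 0 ^ 2 - X 2 ^ 2),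
        -(X 2 * (2 * X 0 ^ 2 + X 1 ^ 2 - 2 * X 2 ^ 2))] := by
  ext1 k
  fin_cases k <;> simp [linSyzygy, quadSyzygy, cross_apply] <;> ring

theorem pderiv_eq_two_smul_cross :
    (fun i => pderiv i
        ((X 0 ^ 2 - X 2 ^ 2) * (X 0 ^ 2 + X 1 ^ 2 - X 2 ^ 2) : MvPolynomial (Fin 3) R)) =
      (2 : MvPolynomial (Fin 3) R) • (linSyzygy R ⨯₃ quadSyzygy R) := by
  rw [linSyzygy_cross_quadSyzygy]
  ext1 k
  fin_cases k <;> simp <;> ring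

theorem span_range_pderiv (h2 : IsUnit (2 : R)) :
    Ideal.span (Set.range fun i =>
        pderiv i ((X 0 ^ 2 - X 2 ^ 2) * (X 0 ^ 2 + X 1 ^ 2 - X 2 ^ 2) : MvPolynomial (Fin 3) R)) =
      Ideal.span (Set.range (linSyzygy R ⨯₃ quadSyzygy R)) := by
  rw [pderiv_eq_two_smul_cross, ← Ideal.submodule_span_eq, ← Ideal.submodule_span_eq,
    Pi.smul_def, Set.range_smul, Submodule.span_smul_eq_of_isUnit]
  simpa only [map_ofNat] using h2.map (C : R →+* MvPolynomial (Fin 3) R)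

variable {R} [IsDomain R]

theorem exists_eq_smul_add_smul_of_dotProduct_cross_eq_zero [NeZero (2 : R)]
    {w : Fin 3 → MvPolynomial (Fin 3) R}
    (hw : w ⬝ᵥ (linSyzygy R ⨯₃ quadSyzygy R) = 0) :
    ∃ A B : MvPolynomial (Fin 3) R, w = A • linSyzygy R + B • quadSyzygy R := by
  rw [linSyzygy_cross_quadSyzygy] at hw
  simp only [dotProduct, Fin.sum_univ_three, cons_val] at hw
  -- `2x² + y² - 2z² ≡ 2 (x² - z²)` modulo `y`
  obtain ⟨K, hK⟩ : X 1 ∣ X 0 * w 0 - X 2 * w 2 :=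
    (X_prime.dvd_or_dvd ⟨-(X 1 * (X 0 * w 0 - X 2 * w 2) + (X 0 ^ 2 - X 2 ^ 2) * w 1),
      by linear_combination hw⟩).resolve_left
      (not_dvd_of_eval_eq_zero (a := 2 * (X 0 ^ 2 - X 2 ^ 2)) ![1, 0, 0] (by simp)
        (by simp [two_ne_zero]))
  have hgK : (2 * X 0 ^ 2 + X 1 ^ 2 - 2 * X 2 ^ 2) * K + (X 0 ^ 2 - X 2 ^ 2) * w 1 = 0 :=
    mul_left_cancel₀ (X_ne_zero 1)
      (by linear_combination hw - (2 * X 0 ^ 2 + X 1 ^ 2 - 2 * X 2 ^ 2) * hK)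
  obtain ⟨t, ht⟩ := X0_sq_sub_X2_sq_dvd_of_dvd_X1_sq_mul (K := K)
    ⟨-(2 * K + w 1), by linear_combination hgK⟩
  have hw₁ : w 1 = -(t * (2 * X 0 ^ 2 + X 1 ^ 2 - 2 * X 2 ^ 2)) :=
    mul_left_cancel₀ (ne_of_apply_ne (eval ![1, 0, 0]) (by simp) :
        (X 0 ^ 2 - X 2 ^ 2 : MvPolynomial (Fin 3) R) ≠ 0)
      (by linear_combination hgK - (2 * X 0 ^ 2 + X 1 ^ 2 - 2 * X 2 ^ 2) * ht)
  obtain ⟨A, hA₀, hA₂⟩ := exists_eq_X_mul_of_X_mul_eq_X_mul (i := 0) (j := 2) (by decide)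
    (u := w 0 - X 0 * X 1 * t) (v := w 2 - X 1 * X 2 * t)
    (by linear_combination hK + X 1 * ht)
  refine ⟨A, t, ?_⟩
  ext1 k
  fin_cases k <;>
    simp only [Fin.zero_eta, Fin.mk_one, Fin.reduceFinMk, linSyzygy, quadSyzygy,
      Pi.add_apply, Pi.smul_apply, smul_eq_mul, cons_val]
  · linear_combination hA₀
  · linear_combination hw₁
  · linear_combination hA₂

theorem eq_zero_of_smul_add_smul_eq_zero {A B : MvPolynomial (Fin 3) R}
    (h : A • linSyzygy R + B • quadSyzygy R = 0) : A = 0 ∧ B = 0 := by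
  have h₀ := congrFun h 0
  have h₁ := congrFun h 1
  simp only [linSyzygy, quadSyzygy, Pi.add_apply, Pi.smul_apply, smul_eq_mul, cons_val,
    Pi.zero_apply, mul_zero, zero_add, mul_eq_zero] at h₀ h₁
  have hB : B = 0 := h₁.resolve_right (ne_of_apply_ne (eval ![0, 1, 0]) (by simp))
  subst hB
  simpa [X_ne_zero] using h₀

end ConicTangents

open ConicTangents

/-- The conic-line arrangement `(x² - z²)(x² + y² - z²) = 0` (a smooth conic with
two tangent lines) is a free plane curve: its Jacobian ideal is saturated with
respect to the irrelevant ideal `⟨x, y, z⟩`, i.e. `(J_f : m) = J_f`. -/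
theorem conic_plus_two_tangent_lines_is_free
    (f : MvPolynomial (Fin 3) ℂ)
    (hf : f = (X 0 ^ 2 - X 2 ^ 2) * (X 0 ^ 2 + X 1 ^ 2 - X 2 ^ 2))
    (Jf : Ideal (MvPolynomial (Fin 3) ℂ))
    (hJf : Jf = Ideal.span {pderiv 0 f, pderiv 1 f, pderiv 2 f})
    (m : Ideal (MvPolynomial (Fin 3) ℂ))
    (hm : m = Ideal.span {X 0, X 1, X 2}) :
    Submodule.colon Jf m = Jf := by
  have hJ : Jf = Ideal.span (Set.range (linSyzygy ℂ ⨯₃ quadSyzygy ℂ)) := by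
    rw [hJf, hf, ← span_range_pderiv ℂ (Ne.isUnit two_ne_zero), Set.range_fin_three]
  have hm' : m = Ideal.span (Set.range X) := by
    rw [hm, Set.range_fin_three]
  rw [hJ, hm']
  exact Ideal.colon_span_range_eq_self_of_syzygies
    (fun _ => exists_eq_cross_X_of_dotProduct_X_eq_zero) (IsRegular.of_ne_zero (X_ne_zero 0)).left
    (fun _ h => (X_prime.dvd_or_dvd h).resolve_left (by simp))
    (dot_self_cross _ _) (dot_cross_self _ _)
    (fun _ => exists_eq_smul_add_smul_of_dotProduct_cross_eq_zero)
    (fun _ _ => eq_zero_of_smul_add_smul_eq_zero)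
end

section
/- Let f = (y − z)(x² − z²)(x² + y² − z²) ∈ ℂ[x,y,z] (a smooth conic inscribed in a triangle), let J_f = ⟨∂f/∂x, ∂f/∂y, ∂f/∂z⟩ be its Jacobian ideal, and let m = ⟨x, y, z⟩. Then the colon ideal (J_f : m) equals J_f; that is, J_f is saturated with respect to m, i.e. the curve f = 0 is a free plane curve. -/
/-!
The partial derivatives of `f` have two independent syzygies `a`, `b` of degree `2` whose cross
product is `-5 ∇f`. Since the partials have no common factor, Saito's criterion shows that every
syzygy is an `S`-combination of `a` and `b`, so the syzygy module is free. Freeness of the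
syzygies plus the fact that `x, y, z` is a regular sequence then gives the saturation: if
`x g, y g, z g ∈ J_f`, the Koszul relation between the three resulting syzygies forces `g ∈ J_f`.
-/

open MvPolynomial Matrix

section CrossProduct

variable {R : Type*} [CommRing R]

theorem cross_eq_zero_iff (n E : Fin 3 → R) : n ⨯₃ E = 0 ↔ ∀ i j, n i * E j = n j * E i := by
  rw [cross_apply]
  simp [Fin.forall_fin_succ, sub_eq_zero]
  grind

/-- Cramer's rule for `p` in the basis `a, b, w` (when `w ⬝ᵥ a ⨯₃ b` is invertible). -/
theorem cross_cramer (p a b w : Fin 3 → R) :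
    (w ⬝ᵥ a ⨯₃ b) • p = (w ⬝ᵥ p ⨯₃ b) • a + (w ⬝ᵥ a ⨯₃ p) • b + (p ⬝ᵥ a ⨯₃ b) • w := by
  ext i
  fin_cases i <;>
  · simp [cross_apply, dotProduct, Fin.sum_univ_three]
    ring

end CrossProduct

theorem ne_zero_of_forall_dvd_isUnit {R ι : Type*} [MonoidWithZero R] [Nontrivial R]
    {v : ι → R} (hv : ∀ d, (∀ i, d ∣ v i) → IsUnit d) : v ≠ 0 := by
  rintro rfl
  exact not_isUnit_zero (hv 0 fun _ ↦ dvd_rfl)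

theorem dvd_dotProduct {R ι : Type*} [CommRing R] [Fintype ι] {d : R} {w : ι → R}
    (hw : ∀ i, d ∣ w i) (v : ι → R) : d ∣ v ⬝ᵥ w :=
  Finset.dvd_sum fun i _ ↦ dvd_mul_of_dvd_right (hw i) _

section Syzygies

variable {R ι : Type*} [CommRing R] [IsDomain R]

theorem eq_zero_of_smul_add_smul_eq_zero {a b : Fin 3 → R} (hab : a ⨯₃ b ≠ 0) {α β : R}
    (h : α • a + β • b = 0) : α = 0 ∧ β = 0 := by
  have hα : α • (a ⨯₃ b) = 0 := by simpa [cross_self] using congrArg (· ⨯₃ b) h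
  have hβ : β • (a ⨯₃ b) = 0 := by simpa [cross_self] using congrArg (a ⨯₃ ·) h
  exact ⟨(smul_eq_zero.mp hα).resolve_right hab, (smul_eq_zero.mp hβ).resolve_right hab⟩

variable [UniqueFactorizationMonoid R]

theorem dvd_of_forall_dvd_mul {v : ι → R} (hv : ∀ d, (∀ i, d ∣ v i) → IsUnit d) {a b : R}
    (ha : a ≠ 0) (h : ∀ i, a ∣ b * v i) : a ∣ b := by
  obtain ⟨a', b', c, hrel, rfl, rfl⟩ := UniqueFactorizationMonoid.exists_reduced_factors a ha b
  have hc : c ≠ 0 := left_ne_zero_of_mul ha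
  have ha' : IsUnit a' := hv a' fun i ↦ hrel.dvd_of_dvd_mul_left <| by
    simpa only [mul_assoc, mul_dvd_mul_iff_left hc] using h i
  exact mul_dvd_mul_left c ha'.dvd

theorem exists_eq_smul_of_cross_eq_zero {n E : Fin 3 → R}
    (hE : ∀ d, (∀ i, d ∣ E i) → IsUnit d) (h : n ⨯₃ E = 0) : ∃ α : R, n = α • E := by
  rw [cross_eq_zero_iff] at h
  obtain ⟨k, hk⟩ := Function.ne_iff.mp (ne_zero_of_forall_dvd_isUnit hE)
  obtain ⟨α, hα⟩ := dvd_of_forall_dvd_mul hE hk fun j ↦ ⟨n j, by rw [h, mul_comm]⟩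
  refine ⟨α, funext fun j ↦ mul_right_cancel₀ hk ?_⟩
  rw [h j k, hα, Pi.smul_apply, smul_eq_mul]
  ring

/-- Saito's criterion for three generators. -/
theorem exists_eq_smul_add_smul_of_dotProduct_cross_eq_zero {a b p : Fin 3 → R}
    (hab : ∀ d, (∀ i, d ∣ (a ⨯₃ b) i) → IsUnit d) (hp : p ⬝ᵥ a ⨯₃ b = 0) :
    ∃ α β : R, p = α • a + β • b := by
  obtain ⟨α, hα⟩ := exists_eq_smul_of_cross_eq_zero hab (n := p ⨯₃ b) <| by
    rw [cross_cross_eq_smul_sub_smul, hp, dot_cross_self, zero_smul, zero_smul, sub_zero]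
  obtain ⟨β, hβ⟩ := exists_eq_smul_of_cross_eq_zero hab (n := a ⨯₃ p) <| by
    rw [cross_cross_eq_smul_sub_smul, hp, dot_self_cross, zero_smul, zero_smul, sub_zero]
  obtain ⟨k, hk⟩ := Function.ne_iff.mp (ne_zero_of_forall_dvd_isUnit hab)
  refine ⟨α, β, smul_right_injective _ hk ?_⟩
  have := cross_cramer p a b (Pi.single k 1)
  simp only [single_dotProduct, one_mul, hα, hβ, hp, zero_smul, add_zero, Pi.smul_apply,
    smul_eq_mul] at this
  dsimp only
  rw [this]
  module

end Syzygies

section Saturation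

variable {R ι : Type*} [CommRing R] [Fintype ι]

theorem mem_span_range_iff_exists_dotProduct {E : ι → R} {g : R} :
    g ∈ Ideal.span (Set.range E) ↔ ∃ p, p ⬝ᵥ E = g :=
  Ideal.mem_span_range_iff_exists_fun

theorem colon_span_range_eq_of_syzygies {x y z : R} {E a b : ι → R}
    (hx : IsLeftRegular x)
    (hy : ∀ t, y * t ∈ Ideal.span {x} → t ∈ Ideal.span {x})
    (hz : ∀ t, z * t ∈ Ideal.span {x, y} → t ∈ Ideal.span {x, y})
    (ha : a ⬝ᵥ E = 0) (hb : b ⬝ᵥ E = 0)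
    (hsyz : ∀ p, p ⬝ᵥ E = 0 → ∃ α β : R, p = α • a + β • b)
    (hind : ∀ α β : R, α • a + β • b = 0 → α = 0 ∧ β = 0) :
    (Ideal.span (Set.range E)).colon (Ideal.span {x, y, z}) = Ideal.span (Set.range E) := by
  refine le_antisymm (fun g hg ↦ ?_) Ideal.le_colon
  simp only [Ideal.colon_span, Submodule.mem_colon, Set.mem_insert_iff, Set.mem_singleton_iff,
    forall_eq_or_imp, forall_eq, smul_eq_mul, mem_span_range_iff_exists_dotProduct] at hg
  obtain ⟨⟨p, hp⟩, ⟨q, hq⟩, ⟨s, hs⟩⟩ := hg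
  obtain ⟨A, B, hAB⟩ := hsyz (y • p - x • q) <| by
    simp only [sub_dotProduct, smul_dotProduct, hp, hq, smul_eq_mul]; ring
  obtain ⟨C, D, hCD⟩ := hsyz (z • q - y • s) <| by
    simp only [sub_dotProduct, smul_dotProduct, hq, hs, smul_eq_mul]; ring
  obtain ⟨F, G, hFG⟩ := hsyz (x • s - z • p) <| by
    simp only [sub_dotProduct, smul_dotProduct, hs, hp, smul_eq_mul]; ring
  -- the Koszul relation `z (y p - x q) + x (z q - y s) + y (x s - z p) = 0`
  obtain ⟨hA₀, hB₀⟩ := hind (z * A + x * C + y * F) (z * B + x * D + y * G) <| by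
    linear_combination (norm := module) -(z • hAB + x • hCD + y • hFG)
  obtain ⟨a₁, a₂, hA⟩ := Ideal.mem_span_pair.mp <|
    hz A (Ideal.mem_span_pair.mpr ⟨-C, -F, by linear_combination -hA₀⟩)
  obtain ⟨b₁, b₂, hB⟩ := Ideal.mem_span_pair.mp <|
    hz B (Ideal.mem_span_pair.mpr ⟨-D, -G, by linear_combination -hB₀⟩)
  have hyx : y • (p - a₂ • a - b₂ • b) = x • (q + a₁ • a + b₁ • b) := by
    linear_combination (norm := module) hAB - hA • a - hB • b
  choose t ht using fun i ↦ Ideal.mem_span_singleton.mp <|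
    hy _ (Ideal.mem_span_singleton.mpr ⟨_, congrFun hyx i⟩)
  have hpt : p = x • t + a₂ • a + b₂ • b := by
    ext i
    have := ht i
    simp only [Pi.add_apply, Pi.sub_apply, Pi.smul_apply, smul_eq_mul] at this ⊢
    linear_combination this
  refine mem_span_range_iff_exists_dotProduct.mpr ⟨t, hx ?_⟩
  calc x * (t ⬝ᵥ E) = (x • t + a₂ • a + b₂ • b) ⬝ᵥ E := by
        simp only [add_dotProduct, smul_dotProduct, ha, hb, smul_eq_mul, mul_zero, add_zero]
    _ = x * g := by rw [← hpt, hp, mul_comm]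

theorem colon_span_range_cross_eq [IsDomain R] [UniqueFactorizationMonoid R] {x y z : R}
    {a b : Fin 3 → R} (hx : IsLeftRegular x)
    (hy : ∀ t, y * t ∈ Ideal.span {x} → t ∈ Ideal.span {x})
    (hz : ∀ t, z * t ∈ Ideal.span {x, y} → t ∈ Ideal.span {x, y})
    (hab : ∀ d, (∀ i, d ∣ (a ⨯₃ b) i) → IsUnit d) :
    (Ideal.span (Set.range (a ⨯₃ b))).colon (Ideal.span {x, y, z}) =
      Ideal.span (Set.range (a ⨯₃ b)) :=
  colon_span_range_eq_of_syzygies hx hy hz (dot_self_cross a b) (dot_cross_self a b)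
    (fun _ ↦ exists_eq_smul_add_smul_of_dotProduct_cross_eq_zero hab)
    (fun _ _ ↦ eq_zero_of_smul_add_smul_eq_zero (ne_zero_of_forall_dvd_isUnit hab))

end Saturation

namespace MvPolynomial

variable {σ R : Type*} [CommRing R]

theorem mem_span_X_image_of_X_mul_mem {s : Set σ} {i : σ} (hi : i ∉ s) {p : MvPolynomial σ R}
    (h : X i * p ∈ Ideal.span (X '' s)) : p ∈ Ideal.span (X '' s) := by
  classical
  rw [mem_ideal_span_X_image] at h ⊢
  intro m hm
  obtain ⟨j, hj, hmj⟩ := h (Finsupp.single i 1 + m) (by simpa [support_X_mul] using hm)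
  have hji : j ≠ i := by rintro rfl; exact hi hj
  exact ⟨j, hj, by simpa [Finsupp.single_apply, hji.symm] using hmj⟩

theorem mem_span_X_singleton_of_X_mul_mem {i j : σ} (hij : i ≠ j) {p : MvPolynomial σ R}
    (h : X i * p ∈ Ideal.span {X j}) : p ∈ Ideal.span {X j} := by
  rw [← Set.image_singleton] at h ⊢
  exact mem_span_X_image_of_X_mul_mem (Set.mem_singleton_iff.not.mpr hij) h

theorem mem_span_X_pair_of_X_mul_mem {i j k : σ} (hij : i ≠ j) (hik : i ≠ k)
    {p : MvPolynomial σ R} (h : X i * p ∈ Ideal.span {X j, X k}) : p ∈ Ideal.span {X j, X k} := by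
  rw [← Set.image_pair] at h ⊢
  exact mem_span_X_image_of_X_mul_mem (by simp [hij, hik]) h

theorem irreducible_X_sub_X [IsDomain R] {i j : σ} (hij : i ≠ j) :
    Irreducible (X i - X j : MvPolynomial σ R) := by
  classical
  have hcoeff : coeff (Finsupp.single i 1) (X i - X j : MvPolynomial σ R) = 1 := by
    simp [coeff_X, (Finsupp.single_left_injective one_ne_zero).ne hij.symm]
  refine irreducible_of_totalDegree_eq_one (le_antisymm ?_ ?_) fun r hr ↦ ?_
  · exact (totalDegree_sub _ _).trans (by simp)
  · have := le_totalDegree (mem_support_iff.mpr (hcoeff ▸ one_ne_zero))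
    rwa [Finsupp.sum_single_index rfl] at this
  · exact isUnit_of_dvd_one (hcoeff ▸ hr _)

theorem isUnit_ofNat {K : Type*} [Field K] [CharZero K] (n : ℕ) [n.AtLeastTwo] :
    IsUnit (OfNat.ofNat n : MvPolynomial σ K) := by
  rw [← map_ofNat C]
  exact (isUnit_iff_ne_zero.mpr (OfNat.ofNat_ne_zero n)).map C

theorem not_dvd_of_eval_eq_zero_s16 {p q : MvPolynomial σ R} (x : σ → R) (hp : eval x p = 0)
    (hq : eval x q ≠ 0) : ¬ p ∣ q :=
  fun h ↦ hq (zero_dvd_iff.mp (hp ▸ map_dvd (eval x) h))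

end MvPolynomial

noncomputable def conicTriangleSyzygy₁ : Fin 3 → MvPolynomial (Fin 3) ℂ :=
  ![X 0 ^ 2 + 5 * X 1 * X 2 - 5 * X 2 ^ 2, X 0 * X 1, 5 * X 0 * X 1 - 4 * X 0 * X 2]

noncomputable def conicTriangleSyzygy₂ : Fin 3 → MvPolynomial (Fin 3) ℂ :=
  ![-3 * X 0 * X 1 + 4 * X 0 * X 2, 5 * X 0 ^ 2 + 2 * X 1 ^ 2 - X 1 * X 2 - 5 * X 2 ^ 2,
    5 * X 0 ^ 2 - 3 * X 1 * X 2 - X 2 ^ 2]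

noncomputable def conicTriangle : MvPolynomial (Fin 3) ℂ :=
  (X 1 - X 2) * (X 0 ^ 2 - X 2 ^ 2) * (X 0 ^ 2 + X 1 ^ 2 - X 2 ^ 2)

theorem conicTriangleSyzygy₁_cross_conicTriangleSyzygy₂ :
    conicTriangleSyzygy₁ ⨯₃ conicTriangleSyzygy₂ =
      (-5 : MvPolynomial (Fin 3) ℂ) • fun i ↦ pderiv i conicTriangle := by
  ext i : 1
  fin_cases i <;>
  · simp [conicTriangle, conicTriangleSyzygy₁, conicTriangleSyzygy₂, cross_apply, pderiv_X,
      Pi.single_apply]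
    ring

theorem isUnit_of_forall_dvd_conicTriangleSyzygy₁_cross (d : MvPolynomial (Fin 3) ℂ)
    (hd : ∀ i, d ∣ (conicTriangleSyzygy₁ ⨯₃ conicTriangleSyzygy₂) i) : IsUnit d := by
  -- combinations of the entries free of `x`, resp. `y`
  have hx_free : ![X 0 * X 1 - 2 * X 0 * X 2, X 1 ^ 2 + 8 * X 1 * X 2 - 10 * X 2 ^ 2,
      5 * X 1 ^ 2 - 4 * X 1 * X 2 - 2 * X 2 ^ 2] ⬝ᵥ conicTriangleSyzygy₁ ⨯₃ conicTriangleSyzygy₂ =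
      50 * (X 1 ^ 3 * X 2 * (X 1 - X 2) ^ 2) := by
    simp [conicTriangleSyzygy₁, conicTriangleSyzygy₂, cross_apply, dotProduct, Fin.sum_univ_three]
    ring
  have hy_free : ![-3 * X 0 ^ 2 * X 1 + X 0 ^ 2 * X 2 + 3 * X 1 * X 2 ^ 2 + X 2 ^ 3,
      4 * X 0 ^ 3 + 2 * X 0 * X 1 ^ 2 - 4 * X 0 * X 2 ^ 2, 2 * X 0 ^ 3] ⬝ᵥ
      conicTriangleSyzygy₁ ⨯₃ conicTriangleSyzygy₂ =
      -10 * (X 0 ^ 3 * (X 0 - X 2) ^ 2 * (X 0 + X 2) ^ 2) := by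
    simp [conicTriangleSyzygy₁, conicTriangleSyzygy₂, cross_apply, dotProduct, Fin.sum_univ_three]
    ring
  have hcop (q : MvPolynomial (Fin 3) ℂ) (hq : Irreducible q) (hq0 : eval ![1, 0, 0] q = 0) :
      IsRelPrime q (X 0 ^ 3 * (X 0 - X 2) ^ 2 * (X 0 + X 2) ^ 2) :=
    hq.isRelPrime_iff_not_dvd.mpr (not_dvd_of_eval_eq_zero_s16 _ hq0 (by simp))
  have hrel : IsRelPrime (50 * (X 1 ^ 3 * X 2 * (X 1 - X 2) ^ 2))
      (-10 * (X 0 ^ 3 * (X 0 - X 2) ^ 2 * (X 0 + X 2) ^ 2) : MvPolynomial (Fin 3) ℂ) := by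
    rw [isRelPrime_mul_unit_left_left (isUnit_ofNat 50),
      isRelPrime_mul_unit_left_right (isUnit_ofNat 10).neg]
    refine IsRelPrime.mul_left (IsRelPrime.mul_left ?_ ?_) ?_
    · exact (hcop _ X_prime.irreducible (by simp)).pow_left
    · exact hcop _ X_prime.irreducible (by simp)
    · exact (hcop _ (irreducible_X_sub_X (by decide)) (by simp)).pow_left
  exact hrel (hx_free ▸ dvd_dotProduct hd _) (hy_free ▸ dvd_dotProduct hd _)

theorem span_pderiv_conicTriangle :
    Ideal.span {pderiv 0 conicTriangle, pderiv 1 conicTriangle, pderiv 2 conicTriangle} =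
      Ideal.span (Set.range (conicTriangleSyzygy₁ ⨯₃ conicTriangleSyzygy₂)) := by
  rw [conicTriangleSyzygy₁_cross_conicTriangleSyzygy₂, Pi.smul_def, Set.range_smul, Ideal.span,
    Ideal.span, Submodule.span_smul_eq_of_isUnit _ _ (isUnit_ofNat 5).neg]
  congr 1
  ext
  simp [Fin.exists_fin_succ, eq_comm]

/-- The conic-line arrangement `(y - z)(x² - z²)(x² + y² - z²) = 0` (a smooth conic
inscribed in a triangle) is a free plane curve: its Jacobian ideal is saturated
with respect to the irrelevant ideal `⟨x, y, z⟩`, i.e. `(J_f : m) = J_f`. -/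
theorem conic_inscribed_in_triangle_is_free
    (f : MvPolynomial (Fin 3) ℂ)
    (hf : f = (X 1 - X 2) * (X 0 ^ 2 - X 2 ^ 2) * (X 0 ^ 2 + X 1 ^ 2 - X 2 ^ 2))
    (Jf : Ideal (MvPolynomial (Fin 3) ℂ))
    (hJf : Jf = Ideal.span {pderiv 0 f, pderiv 1 f, pderiv 2 f})
    (m : Ideal (MvPolynomial (Fin 3) ℂ))
    (hm : m = Ideal.span {X 0, X 1, X 2}) :
    Submodule.colon Jf m = Jf := by
  replace hf : f = conicTriangle := hf
  subst hf hJf hm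
  rw [span_pderiv_conicTriangle]
  exact colon_span_range_cross_eq isRegular_X.left
    (fun _ ↦ mem_span_X_singleton_of_X_mul_mem (by decide))
    (fun _ ↦ mem_span_X_pair_of_X_mul_mem (by decide) (by decide))
    isUnit_of_forall_dvd_conicTriangleSyzygy₁_cross
end

section
/- Let f = (x³ − y³)(y³ − z³)(x³ − z³) ∈ ℂ[x,y,z] (the dual Hesse arrangement of 9 lines with exactly 12 ordinary triple points and no other singularities), let J_f = ⟨∂f/∂x, ∂f/∂y, ∂f/∂z⟩ be its Jacobian ideal, and let m = ⟨x, y, z⟩. Then the colon ideal (J_f : m) equals J_f; that is, J_f is saturated with respect to m, i.e. the curve f = 0 is a free plane curve (of degree 9, showing that the degree bound m ≤ 9 for free curves with only nodes, tacnodes and ordinary triple points is sharp). -/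
/-!
The line `ℓ = x + y + 2z` misses the twelve triple points, so the partials of `f` restrict to
binary octics without common zero; a certificate shows that their ideal contains `z ^ 11`.
The gradient is the cross product `∇f = S × T` of two syzygies of degree 4, and `a · (s × t) = 0`
forces `a ∈ ⟨s, t⟩` once the entries of `s × t` have no common factor. Hence every syzygy of
`∇f` modulo `ℓ` lifts to a syzygy of `∇f`, i.e. `ℓ` is a non-zero-divisor modulo `J_f`, and
`(J_f : m) ⊆ (J_f : ℓ) = J_f`.
-/

open MvPolynomial Matrix

section CrossProduct

variable {R : Type*} [CommRing R]

/-- Cramer's rule in dimension three. -/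
theorem dotProduct_cross_smul_eq (s t a e : Fin 3 → R) :
    (e ⬝ᵥ s ⨯₃ t) • a = (e ⬝ᵥ a ⨯₃ t) • s + (e ⬝ᵥ s ⨯₃ a) • t + (a ⬝ᵥ s ⨯₃ t) • e := by
  ext i
  fin_cases i <;>
  · simp only [cross_apply, vec3_dotProduct, Pi.add_apply, Pi.smul_apply, smul_eq_mul, cons_val,
      Fin.zero_eta, Fin.mk_one, Fin.reduceFinMk, Fin.isValue]
    ring

theorem RingHom.comp_cross {S : Type*} [CommRing S] (φ : R →+* S) (u v : Fin 3 → R) :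
    φ ∘ (u ⨯₃ v) = (φ ∘ u) ⨯₃ (φ ∘ v) := by
  ext i
  fin_cases i <;> simp [cross_apply]

variable [IsDomain R] {y : R} {n : ℕ} {i : Fin 3}

theorem exists_eq_smul_of_cross_eq_zero_s19 {D : Fin 3 → R} (hy : Prime y) (hyD : ¬ y ∣ D i)
    (hD : y ^ n ∈ Ideal.span (Set.range D)) {u : Fin 3 → R} (hu : u ⨯₃ D = 0) :
    ∃ α : R, u = α • D := by
  obtain ⟨P, hP⟩ := Ideal.mem_span_range_iff_exists_fun.mp hD
  have hP : P ⬝ᵥ D = y ^ n := hP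
  have key : y ^ n • u = (u ⬝ᵥ P) • D := by
    have := cross_cross_eq_smul_sub_smul' P u D
    rwa [hu, map_zero, hP, eq_comm, sub_eq_zero] at this
  obtain ⟨α, hα⟩ : y ^ n ∣ u ⬝ᵥ P :=
    hy.pow_dvd_of_dvd_mul_right n hyD ⟨u i, by simpa [mul_comm] using (congrFun key i).symm⟩
  refine ⟨α, smul_right_injective _ (pow_ne_zero n hy.ne_zero) ?_⟩
  simp only [key, hα, smul_smul]

theorem exists_eq_smul_add_smul_of_dotProduct_cross_eq_zero_s19 {s t : Fin 3 → R} (hy : Prime y)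
    (hyD : ¬ y ∣ (s ⨯₃ t) i) (hD : y ^ n ∈ Ideal.span (Set.range (s ⨯₃ t)))
    {a : Fin 3 → R} (ha : a ⬝ᵥ s ⨯₃ t = 0) : ∃ α β : R, a = α • s + β • t := by
  obtain ⟨α, hα⟩ := exists_eq_smul_of_cross_eq_zero_s19 hy hyD hD (u := a ⨯₃ t) (by
    rw [cross_cross_eq_smul_sub_smul, ha, dot_cross_self, zero_smul, zero_smul, sub_zero])
  obtain ⟨β, hβ⟩ := exists_eq_smul_of_cross_eq_zero_s19 hy hyD hD (u := s ⨯₃ a) (by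
    rw [cross_cross_eq_smul_sub_smul, ha, dot_self_cross, zero_smul, zero_smul, sub_zero])
  have hDi : (s ⨯₃ t) i ≠ 0 := fun h => hyD (by rw [h]; exact dvd_zero y)
  refine ⟨α, β, smul_right_injective _ hDi ?_⟩
  have cramer := dotProduct_cross_smul_eq s t a (Pi.single i 1)
  simp only [single_one_dotProduct, hα, hβ, ha, zero_smul, add_zero] at cramer
  simp only [cramer, Pi.smul_apply, smul_eq_mul, smul_add, smul_smul, mul_comm]

end CrossProduct

section Syzygies

variable {R : Type*} [CommRing R] {ι : Type*} [Fintype ι] {F : ι → R} {ℓ : R}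

theorem mem_span_range_of_mul_mem (hℓ : IsLeftRegular ℓ)
    (hlift : ∀ a : ι → R, ℓ ∣ a ⬝ᵥ F → ∃ b : ι → R, b ⬝ᵥ F = 0 ∧ ∀ i, ℓ ∣ a i - b i)
    {g : R} (hg : ℓ * g ∈ Ideal.span (Set.range F)) : g ∈ Ideal.span (Set.range F) := by
  obtain ⟨a, ha⟩ := Ideal.mem_span_range_iff_exists_fun.mp hg
  obtain ⟨b, hb, hab⟩ := hlift a ⟨g, ha⟩
  choose c hc using hab
  have : g = c ⬝ᵥ F := hℓ <| by
    calc ℓ * g = (a - b) ⬝ᵥ F := by rw [sub_dotProduct, hb, sub_zero]; exact ha.symm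
      _ = ℓ * (c ⬝ᵥ F) := by
        rw [← smul_eq_mul, ← smul_dotProduct]; congr 1; ext i; exact hc i
  exact this ▸ Ideal.mem_span_range_iff_exists_fun.mpr ⟨c, rfl⟩

/-- `φ` plays the role of restriction to the hypersurface `ℓ = 0`. -/
theorem exists_syzygy_sub_dvd_of_retraction (φ : R →+* R) (hφ : ∀ p, φ (φ p) = φ p)
    (hφℓ : φ ℓ = 0) (hker : ∀ p, ℓ ∣ p - φ p) {S T : ι → R} (hS : S ⬝ᵥ F = 0) (hT : T ⬝ᵥ F = 0)
    (hspan : ∀ a : ι → R, a ⬝ᵥ (φ ∘ F) = 0 → ∃ α β : R, a = α • (φ ∘ S) + β • (φ ∘ T))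
    {a : ι → R} (ha : ℓ ∣ a ⬝ᵥ F) :
    ∃ b : ι → R, b ⬝ᵥ F = 0 ∧ ∀ i, ℓ ∣ a i - b i := by
  obtain ⟨α, β, hαβ⟩ : ∃ α β : R, φ ∘ a = α • (φ ∘ S) + β • (φ ∘ T) := by
    refine hspan _ ?_
    obtain ⟨k, hk⟩ := ha
    rw [← RingHom.map_dotProduct, hk, map_mul, hφℓ, zero_mul]
  refine ⟨φ α • S + φ β • T, ?_, fun i => ?_⟩
  · rw [add_dotProduct, smul_dotProduct, smul_dotProduct, hS, hT, smul_zero, smul_zero, add_zero]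
  · have hi := congrArg φ (congrFun hαβ i)
    simp only [Function.comp_apply, Pi.add_apply, Pi.smul_apply, smul_eq_mul, map_add, map_mul,
      hφ] at hi ⊢
    have := hker (a i - (φ α * S i + φ β * T i))
    rwa [map_sub, map_add, map_mul, map_mul, hφ, hφ, ← hi, sub_self, sub_zero] at this

end Syzygies

section Substitution

variable {σ R : Type*} [CommRing R] [DecidableEq σ]

theorem X_sub_dvd_sub_aeval_update (i : σ) (q p : MvPolynomial σ R) :
    X i - q ∣ p - aeval (Function.update X i q) p := by
  rw [← Ideal.mem_span_singleton, ← Ideal.Quotient.eq]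
  suffices h : (Ideal.Quotient.mkₐ R (Ideal.span {X i - q})).comp (aeval (Function.update X i q))
      = Ideal.Quotient.mkₐ R _ from (AlgHom.congr_fun h p).symm
  refine algHom_ext fun j => ?_
  rcases eq_or_ne j i with rfl | hj
  · simp only [AlgHom.comp_apply, aeval_X, Function.update_self, Ideal.Quotient.mkₐ_eq_mk]
    exact Ideal.Quotient.eq.mpr
      (Ideal.mem_span_singleton.mpr (neg_sub (X j) q ▸ dvd_neg.mpr dvd_rfl))
  · simp [hj]

theorem aeval_update_aeval_update {i : σ} {q : MvPolynomial σ R}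
    (hq : aeval (Function.update X i q) q = q) (p : MvPolynomial σ R) :
    aeval (Function.update X i q) (aeval (Function.update X i q) p) =
      aeval (Function.update X i q) p := by
  rw [← AlgHom.comp_apply]
  refine AlgHom.congr_fun (algHom_ext fun j => ?_) p
  rcases eq_or_ne j i with rfl | hj
  · simpa using hq
  · simp [hj]

end Substitution

noncomputable section

namespace DualHesse

def syzygy₁ : Fin 3 → MvPolynomial (Fin 3) ℂ :=
  ![X 1 ^ 2 * X 2 ^ 2, X 0 ^ 2 * X 2 ^ 2, X 0 ^ 2 * X 1 ^ 2]

def syzygy₂ : Fin 3 → MvPolynomial (Fin 3) ℂ :=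
  ![3 * X 0 ^ 4 - 6 * X 0 * (X 1 ^ 3 + X 2 ^ 3), 3 * X 1 ^ 4 - 6 * X 1 * (X 0 ^ 3 + X 2 ^ 3),
    3 * X 2 ^ 4 - 6 * X 2 * (X 0 ^ 3 + X 1 ^ 3)]

theorem pderiv_eq_cross (i : Fin 3) :
    pderiv i ((X 0 ^ 3 - X 1 ^ 3) * (X 1 ^ 3 - X 2 ^ 3) * (X 0 ^ 3 - X 2 ^ 3)) =
      (syzygy₁ ⨯₃ syzygy₂) i := by
  fin_cases i <;>
  · simp only [cross_apply, syzygy₁, syzygy₂, Derivation.leibniz, Derivation.leibniz_pow, map_sub,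
      pderiv_X, Pi.single_apply, smul_eq_mul, nsmul_eq_mul, Fin.zero_eta, Fin.mk_one,
      Fin.reduceFinMk, Fin.isValue, Fin.reduceEq, ↓reduceIte, cons_val]
    ring

theorem span_pderiv_eq_span_cross :
    Ideal.span {pderiv 0 ((X 0 ^ 3 - X 1 ^ 3) * (X 1 ^ 3 - X 2 ^ 3) * (X 0 ^ 3 - X 2 ^ 3)),
      pderiv 1 ((X 0 ^ 3 - X 1 ^ 3) * (X 1 ^ 3 - X 2 ^ 3) * (X 0 ^ 3 - X 2 ^ 3)),
      pderiv 2 ((X 0 ^ 3 - X 1 ^ 3) * (X 1 ^ 3 - X 2 ^ 3) * (X 0 ^ 3 - X 2 ^ 3))} =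
    Ideal.span (Set.range (syzygy₁ ⨯₃ syzygy₂)) := by
  simp only [pderiv_eq_cross]
  congr 1
  ext p
  simp [Fin.exists_fin_succ, eq_comm]

def line : MvPolynomial (Fin 3) ℂ := X 0 + X 1 + 2 * X 2

def toLine : MvPolynomial (Fin 3) ℂ →+* MvPolynomial (Fin 3) ℂ :=
  (aeval (Function.update X 0 (-X 1 - 2 * X 2) : Fin 3 → MvPolynomial (Fin 3) ℂ)).toRingHom

theorem toLine_X_zero : toLine (X 0) = -X 1 - 2 * X 2 := by simp [toLine]

theorem toLine_X_one : toLine (X 1) = X 1 := by simp [toLine]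

theorem toLine_X_two : toLine (X 2) = X 2 := by simp [toLine]

theorem toLine_toLine (p : MvPolynomial (Fin 3) ℂ) : toLine (toLine p) = toLine p :=
  aeval_update_aeval_update (by simp [map_ofNat]) p

theorem toLine_line : toLine line = 0 := by
  simp only [line, map_add, map_mul, map_ofNat, toLine_X_zero, toLine_X_one, toLine_X_two]
  ring

theorem line_dvd_sub_toLine (p : MvPolynomial (Fin 3) ℂ) : line ∣ p - toLine p := by
  rw [show line = X 0 - (-X 1 - 2 * X 2) by rw [line]; ring]
  exact X_sub_dvd_sub_aeval_update 0 _ p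

/-- The cofactors are the unique solution of the `12 × 12` linear system obtained by comparing
coefficients of binary forms of degree 11. -/
theorem X_two_pow_mem_span :
    X 2 ^ 11 ∈ Ideal.span (Set.range ((toLine ∘ syzygy₁) ⨯₃ (toLine ∘ syzygy₂))) := by
  have cert : ∑ i, ![27 * X 1 ^ 3 + 81 * X 1 ^ 2 * X 2 + 94 * X 1 * X 2 ^ 2 + 236 * X 2 ^ 3,
      27 * X 1 ^ 3 + 81 * X 1 ^ 2 * X 2 + 94 * X 1 * X 2 ^ 2 - 156 * X 2 ^ 3,
      -53 * X 1 ^ 3 - 159 * X 1 ^ 2 * X 2 + 75 * X 1 * X 2 ^ 2 + 181 * X 2 ^ 3] i *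
      ((toLine ∘ syzygy₁) ⨯₃ (toLine ∘ syzygy₂)) i =
        (4704 : MvPolynomial (Fin 3) ℂ) * X 2 ^ 11 := by
    simp only [Fin.sum_univ_three, cross_apply, Function.comp_apply, syzygy₁, syzygy₂, cons_val,
      Fin.isValue, map_add, map_sub, map_mul, map_pow, map_ofNat, toLine_X_zero, toLine_X_one,
      toLine_X_two]
    ring
  have h := Ideal.mul_mem_left _ (C (4704⁻¹ : ℂ))
    (Ideal.mem_span_range_iff_exists_fun.mpr ⟨_, cert⟩)
  rwa [← mul_assoc, ← map_ofNat C, ← C_mul, inv_mul_cancel₀ (by norm_num), C_1, one_mul] at h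

theorem not_X_two_dvd : ¬ X 2 ∣ ((toLine ∘ syzygy₁) ⨯₃ (toLine ∘ syzygy₂)) 0 := by
  rintro ⟨p, hp⟩
  have := congrArg (eval ![0, 1, 0]) hp
  simp only [cross_apply, Function.comp_apply, syzygy₁, syzygy₂, cons_val, map_sub, map_mul,
    map_pow, map_add, map_ofNat, toLine_X_zero, toLine_X_one, toLine_X_two, eval_X] at this
  norm_num at this

theorem mem_span_cross_of_line_mul_mem {g : MvPolynomial (Fin 3) ℂ}
    (hg : line * g ∈ Ideal.span (Set.range (syzygy₁ ⨯₃ syzygy₂))) :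
    g ∈ Ideal.span (Set.range (syzygy₁ ⨯₃ syzygy₂)) := by
  have hline : line ≠ 0 := fun h => by
    simpa [line] using congrArg (eval ![1, 0, 0]) h
  refine mem_span_range_of_mul_mem (IsRegular.of_ne_zero hline).left (fun a ha =>
    exists_syzygy_sub_dvd_of_retraction toLine toLine_toLine toLine_line line_dvd_sub_toLine
      (dot_self_cross _ _) (dot_cross_self _ _) (fun b hb => ?_) ha) hg
  rw [RingHom.comp_cross] at hb
  exact exists_eq_smul_add_smul_of_dotProduct_cross_eq_zero_s19 X_prime not_X_two_dvd
    X_two_pow_mem_span hb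

end DualHesse

end

/-- The dual Hesse arrangement `(x³ - y³)(y³ - z³)(x³ - z³) = 0` of nine lines with
twelve ordinary triple points is a free plane curve (of degree 9): its Jacobian
ideal is saturated with respect to the irrelevant ideal, i.e. `(J_f : m) = J_f`. -/
theorem dual_hesse_arrangement_is_free
    (f : MvPolynomial (Fin 3) ℂ)
    (hf : f = (X 0 ^ 3 - X 1 ^ 3) * (X 1 ^ 3 - X 2 ^ 3) * (X 0 ^ 3 - X 2 ^ 3))
    (Jf : Ideal (MvPolynomial (Fin 3) ℂ))
    (hJf : Jf = Ideal.span {pderiv 0 f, pderiv 1 f, pderiv 2 f})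
    (m : Ideal (MvPolynomial (Fin 3) ℂ))
    (hm : m = Ideal.span {X 0, X 1, X 2}) :
    Submodule.colon Jf m = Jf := by
  have hline : DualHesse.line ∈ m := by
    rw [hm, DualHesse.line]
    refine add_mem (add_mem ?_ ?_) (Ideal.mul_mem_left _ _ ?_) <;> exact Ideal.subset_span (by simp)
  refine le_antisymm (fun g hg => ?_) Ideal.le_colon
  have hlineg : DualHesse.line * g ∈ Jf := by
    rw [mul_comm]
    exact Submodule.mem_colon.mp hg _ hline
  rw [hJf, hf, DualHesse.span_pderiv_eq_span_cross] at hlineg ⊢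
  exact DualHesse.mem_span_cross_of_line_mul_mem hlineg
end
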